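/- The combined propagation R_i = Σ_{kl} (|x_{ki}-y_{li}|^q / Σ_j |x_{kj}-y_{lj}|^q) · R_{kl}, where R_{kl} = γ*_{kl} z_{kl}^p / (Σ γ*_{kl} z_{kl}^p) · W_p and z_{kl} = ‖x_k - y_l‖_q, equals the gradient computation R_i = (∂W_p/∂x_{:,i})ᵀ x_{:,i} + (∂W_p/∂y_{:,i})ᵀ y_{:,i}, where W_p = (Σ_{kl} γ*_{kl} ‖x_k - y_l‖_q^p)^{1/p} with γ* treated as constant. -/

import Mathlib

open Real

noncomputable def phi (N M d : ℕ) (k : Fin N) (l : Fin M) (j : Fin d) :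
    ((Fin N → Fin d → ℝ) × (Fin M → Fin d → ℝ)) →L[ℝ] ℝ :=
  ((ContinuousLinearMap.proj j).comp ((ContinuousLinearMap.proj k).comp
      (ContinuousLinearMap.fst ℝ (Fin N → Fin d → ℝ) (Fin M → Fin d → ℝ)))) -
  ((ContinuousLinearMap.proj j).comp ((ContinuousLinearMap.proj l).comp
      (ContinuousLinearMap.snd ℝ (Fin N → Fin d → ℝ) (Fin M → Fin d → ℝ))))

lemma phi_apply (N M d : ℕ) (k : Fin N) (l : Fin M) (j : Fin d)
    (u : (Fin N → Fin d → ℝ) × (Fin M → Fin d → ℝ)) :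
    phi N M d k l j u = u.1 k j - u.2 l j := rfl

lemma phi_hasFDerivAt (N M d : ℕ) (k : Fin N) (l : Fin M) (j : Fin d)
    (u : (Fin N → Fin d → ℝ) × (Fin M → Fin d → ℝ)) :
    HasFDerivAt (fun u : (Fin N → Fin d → ℝ) × (Fin M → Fin d → ℝ) => u.1 k j - u.2 l j)
      (phi N M d k l j) u :=
  (phi N M d k l j).hasFDerivAt



/-- Proposition 2: the combined WaX propagation with `α = p`, `β = q` coincides with
the Gradient×Input computation
`R_i = (∂W_p/∂x_{:,i})ᵀ x_{:,i} + (∂W_p/∂y_{:,i})ᵀ y_{:,i}`. -/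
theorem wax_combined_gradient_times_input (N M d : ℕ) (p q : ℝ)
    (hp : 1 ≤ p) (hq : 1 < q)
    (x : Fin N → Fin d → ℝ) (y : Fin M → Fin d → ℝ)
    (hxy : ∀ k l i, x k i ≠ y l i)
    (γ : Fin N → Fin M → ℝ) (hγ : ∀ k l, 0 ≤ γ k l)
    (W : (Fin N → Fin d → ℝ) × (Fin M → Fin d → ℝ) → ℝ)
    (hW : W = fun u =>
      (∑ k, ∑ l, γ k l * ((∑ i, |u.1 k i - u.2 l i| ^ q) ^ (1 / q)) ^ p) ^ (1 / p))
    (hden : 0 < ∑ k, ∑ l, γ k l * ((∑ i, |x k i - y l i| ^ q) ^ (1 / q)) ^ p)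
    (i : Fin d) :
    (∑ k, ∑ l, |x k i - y l i| ^ q / (∑ j, |x k j - y l j| ^ q)
        * (γ k l * ((∑ j, |x k j - y l j| ^ q) ^ (1 / q)) ^ p
            / (∑ k', ∑ l', γ k' l' * ((∑ j, |x k' j - y l' j| ^ q) ^ (1 / q)) ^ p)
            * W (x, y)))
      = (∑ k, fderiv ℝ W (x, y) (Pi.single k (Pi.single i (x k i)), 0))
        + (∑ l, fderiv ℝ W (x, y) (0, Pi.single l (Pi.single i (y l i)))) := by
  classical
  have hp0 : (0:ℝ) < p := lt_of_lt_of_le one_pos hp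
  have hq0 : (0:ℝ) < q := lt_trans one_pos hq
  have hApos : ∀ (k : Fin N) (l : Fin M), 0 < ∑ j, |x k j - y l j| ^ q := fun k l =>
    Finset.sum_pos' (fun j _ => rpow_nonneg (abs_nonneg _) q)
      ⟨i, Finset.mem_univ i, rpow_pos_of_pos (abs_pos.2 (sub_ne_zero.2 (hxy k l i))) q⟩
  set S : ℝ := ∑ k, ∑ l, γ k l * ((∑ j, |x k j - y l j| ^ q) ^ (1 / q)) ^ p with hSdef
  have hSpos : 0 < S := hden
  -- the derivative
  have key : HasFDerivAt W
      ((1 / p * S ^ (1 / p - 1)) • ∑ k, ∑ l,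
        γ k l • ((p * ((∑ j, |x k j - y l j| ^ q) ^ (1 / q)) ^ (p - 1)
            * (1 / q * (∑ j, |x k j - y l j| ^ q) ^ (1 / q - 1))) •
          (∑ j : Fin d, (q * |x k j - y l j| ^ (q - 2) * (x k j - y l j)) • phi N M d k l j)))
      (x, y) := by
    rw [hW]
    have houter : HasDerivAt (fun t : ℝ => t ^ (1 / p)) (1 / p * S ^ (1 / p - 1)) S :=
      Real.hasDerivAt_rpow_const (Or.inl hSpos.ne')
    refine HasDerivAt.comp_hasFDerivAt (f := fun u : (Fin N → Fin d → ℝ) × (Fin M → Fin d → ℝ) =>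
      ∑ k, ∑ l, γ k l * ((∑ i, |u.1 k i - u.2 l i| ^ q) ^ (1 / q)) ^ p) (x, y) houter ?_
    refine HasFDerivAt.fun_sum fun k _ => HasFDerivAt.fun_sum fun l _ => ?_
    refine HasFDerivAt.const_mul ?_ (γ k l)
    have h1 : HasFDerivAt (fun u : (Fin N → Fin d → ℝ) × (Fin M → Fin d → ℝ) =>
          ∑ j, |u.1 k j - u.2 l j| ^ q)
        (∑ j, (q * |x k j - y l j| ^ (q - 2) * (x k j - y l j)) • phi N M d k l j) (x, y) :=
      HasFDerivAt.fun_sum fun j _ => by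
        have h := (hasDerivAt_abs_rpow (x k j - y l j) hq).comp_hasFDerivAt
          (x, y) (phi_hasFDerivAt N M d k l j (x, y))
        exact h
    have h2 : HasDerivAt (fun t : ℝ => (t ^ (1 / q)) ^ p)
        (p * ((∑ j, |x k j - y l j| ^ q) ^ (1 / q)) ^ (p - 1)
          * (1 / q * (∑ j, |x k j - y l j| ^ q) ^ (1 / q - 1)))
        (∑ j, |x k j - y l j| ^ q) :=
      by
        have h := (Real.hasDerivAt_rpow_const (p := p) (Or.inl (rpow_pos_of_pos (hApos k l) (1 / q)).ne')).comp
          (∑ j, |x k j - y l j| ^ q) (Real.hasDerivAt_rpow_const (p := 1 / q) (Or.inl (hApos k l).ne'))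
        exact h
    exact h2.comp_hasFDerivAt (x, y) h1
  rw [key.fderiv]
  have hWxy : W (x, y) = S ^ (1 / p) := by rw [hW]
  rw [hWxy]
  simp only [ContinuousLinearMap.smul_apply, ContinuousLinearMap.sum_apply, smul_eq_mul,
    phi_apply, Pi.single_apply, ite_apply, Pi.zero_apply, mul_ite, mul_zero, ite_mul, zero_mul,
    Finset.sum_ite_eq', Finset.mem_univ, if_true, sub_zero, zero_sub, mul_neg,
    Finset.sum_neg_distrib, neg_zero, Finset.sum_ite_irrel, Finset.sum_const_zero]
  simp only [Finset.mul_sum]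
  rw [← sub_eq_add_neg, Finset.sum_comm (s := (Finset.univ : Finset (Fin M)))]
  simp only [← Finset.sum_sub_distrib]
  refine Finset.sum_congr rfl fun k _ => Finset.sum_congr rfl fun l _ => ?_
  have hA : 0 < ∑ j, |x k j - y l j| ^ q := hApos k l
  have ht : 0 < |x k i - y l i| := abs_pos.2 (sub_ne_zero.2 (hxy k l i))
  have hB : 0 < (∑ j, |x k j - y l j| ^ q) ^ (1 / q) := rpow_pos_of_pos hA _
  have e1 : |x k i - y l i| ^ q
      = |x k i - y l i| ^ (q - 2) * ((x k i - y l i) * (x k i - y l i)) := by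
    rw [← abs_mul_abs_self, show |x k i - y l i| * |x k i - y l i| = |x k i - y l i| ^ (2:ℝ) by
      rw [show (2:ℝ) = ((2:ℕ):ℝ) by norm_num, Real.rpow_natCast]; ring,
      ← Real.rpow_add ht]
    norm_num
  have eS : S ^ (1 / p - 1) = S ^ (1 / p) / S := by
    rw [Real.rpow_sub hSpos, Real.rpow_one]
  have eB : ((∑ j, |x k j - y l j| ^ q) ^ (1 / q)) ^ (p - 1)
      = ((∑ j, |x k j - y l j| ^ q) ^ (1 / q)) ^ p / (∑ j, |x k j - y l j| ^ q) ^ (1 / q) := by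
    rw [Real.rpow_sub hB, Real.rpow_one]
  have eA : (∑ j, |x k j - y l j| ^ q) ^ (1 / q - 1)
      = (∑ j, |x k j - y l j| ^ q) ^ (1 / q) / (∑ j, |x k j - y l j| ^ q) := by
    rw [Real.rpow_sub hA, Real.rpow_one]
  rw [eS, eB, eA]
  rw [e1]
  field_simp
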